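/- arXiv:0909.1926 — 4 statements merged into one kernel-verified Lean document; each statement's English description precedes it below -/
import Mathlib

section
/- Let p be a prime and k a perfect field of characteristic p. Then the ring W₂(k) of Witt vectors of length two over k is flat as a module over ℤ/p²ℤ. -/
/-!
Over the principal ideal ring `ℤ/pⁿ`, a module `M` is flat as soon as every relation `a • m = 0`
is explained by the annihilator of `a`, i.e. `m = b • n` with `b * a = 0`. Every `a : ℤ/pⁿ` is
`pᵉ` times a unit with `e ≤ n`, and `pⁿ⁻ᵉ` kills it, so it suffices that the `pᵉ`-torsion of
`Wₙ(k)` is `pⁿ⁻ᵉ Wₙ(k)`. This is seen in `W(k)`, which for perfect `k` is `p`-torsion-free and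
has `pⁿ W(k)` as the kernel of truncation.
-/

open TensorProduct

instance ZMod.instIsPrincipalIdealRing (n : ℕ) : IsPrincipalIdealRing (ZMod n) :=
  IsPrincipalIdealRing.of_surjective (Int.castRingHom (ZMod n)) ZMod.intCast_surjective

theorem ZMod.exists_eq_pow_mul_unit {p : ℕ} (hp : p.Prime) (n : ℕ) (a : ZMod (p ^ n)) :
    ∃ e ≤ n, ∃ u : (ZMod (p ^ n))ˣ, a = p ^ e * u := by
  have : NeZero (p ^ n) := ⟨pow_ne_zero n hp.ne_zero⟩
  by_cases ha : a = 0
  · exact ⟨n, le_rfl, 1, by rw [ha, Units.val_one, mul_one, ← Nat.cast_pow, ZMod.natCast_self]⟩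
  obtain ⟨e, c, hpc, hc⟩ :=
    Nat.exists_eq_pow_mul_and_not_dvd ((ZMod.val_ne_zero a).2 ha) p hp.ne_one
  have hcop : c.Coprime (p ^ n) := ((hp.coprime_iff_not_dvd.2 hpc).pow_left n).symm
  have he : p ^ e < p ^ n := calc
    p ^ e ≤ a.val :=
      hc ▸ Nat.le_mul_of_pos_right _ (Nat.pos_of_ne_zero (by rintro rfl; simp at hpc))
    _ < p ^ n := ZMod.val_lt a
  refine ⟨e, ((Nat.pow_lt_pow_iff_right hp.one_lt).1 he).le, ZMod.unitOfCoprime c hcop, ?_⟩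
  rw [ZMod.coe_unitOfCoprime, ← ZMod.natCast_zmod_val a, hc]
  push_cast
  rfl

section

variable {R M : Type*} [CommRing R] [AddCommGroup M] [Module R M]

theorem Ideal.exists_eq_generator_tmul (a : R) (t : Ideal.span {a} ⊗[R] M) :
    ∃ m : M, t = ⟨a, Ideal.mem_span_singleton_self a⟩ ⊗ₜ m := by
  induction t using TensorProduct.induction_on with
  | zero => exact ⟨0, (tmul_zero _ _).symm⟩
  | tmul b m =>
    obtain ⟨r, hr⟩ := Ideal.mem_span_singleton'.1 b.2
    refine ⟨r • m, ?_⟩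
    rw [← smul_tmul]
    congr 1
    ext
    simp [hr]
  | add t₁ t₂ h₁ h₂ =>
    obtain ⟨m₁, rfl⟩ := h₁
    obtain ⟨m₂, rfl⟩ := h₂
    exact ⟨m₁ + m₂, (tmul_add _ _ _).symm⟩

theorem Ideal.rTensor_subtype_span_singleton_injective (a : R)
    (h : ∀ m : M, a • m = 0 → ∃ (b : R) (n : M), b * a = 0 ∧ m = b • n) :
    Function.Injective ((Ideal.span {a}).subtype.rTensor M) := by
  rw [injective_iff_map_eq_zero]
  intro t ht
  obtain ⟨m, rfl⟩ := Ideal.exists_eq_generator_tmul a t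
  obtain ⟨b, n, hba, rfl⟩ := h m (by simpa using congrArg (TensorProduct.lid R M) ht)
  have hb : b • (⟨a, Ideal.mem_span_singleton_self a⟩ : Ideal.span {a}) = 0 :=
    Subtype.ext (by simp [hba])
  rw [← smul_tmul, hb, zero_tmul]

theorem Module.Flat.of_isPrincipalIdealRing [IsPrincipalIdealRing R]
    (h : ∀ (a : R) (m : M), a • m = 0 → ∃ (b : R) (n : M), b * a = 0 ∧ m = b • n) :
    Module.Flat R M := by
  refine Module.Flat.iff_rTensor_injective'.2 fun I => ?_
  obtain ⟨a, rfl⟩ := Submodule.IsPrincipal.principal I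
  exact Ideal.rTensor_subtype_span_singleton_injective a (h a)

end

theorem TruncatedWittVector.exists_eq_p_pow_mul_of_p_pow_mul_eq_zero {p : ℕ} [Fact p.Prime]
    {k : Type*} [CommRing k] [CharP k p] [PerfectRing k p] {n e : ℕ} (he : e ≤ n)
    {m : TruncatedWittVector p n k} (hm : (p : TruncatedWittVector p n k) ^ e * m = 0) :
    ∃ m' : TruncatedWittVector p n k, m = p ^ (n - e) * m' := by
  obtain ⟨x, rfl⟩ := WittVector.truncate_surjective p n k m
  have hx : (p : WittVector p k) ^ e * x ∈ Ideal.span {(p : WittVector p k) ^ n} := by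
    rw [WittVector.mem_span_p_pow_iff_le_coeff_eq_zero, ← WittVector.mem_ker_truncate,
      RingHom.mem_ker, map_mul, map_pow, map_natCast, hm]
  obtain ⟨y, hy⟩ := Ideal.mem_span_singleton'.1 hx
  have hreg : IsRightRegular ((p : WittVector p k) ^ e) :=
    (isRightRegular_of_non_zero_divisor _ WittVector.eq_zero_of_p_mul_eq_zero).pow e
  refine ⟨WittVector.truncate n y, ?_⟩
  rw [← map_natCast (WittVector.truncate n), ← map_pow, ← map_mul]
  congr 1
  apply hreg
  rw [← pow_sub_mul_pow (p : WittVector p k) he] at hy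
  dsimp only
  linear_combination -hy

theorem TruncatedWittVector.flat_zmod {p : ℕ} [Fact p.Prime] (k : Type*) [CommRing k]
    [CharP k p] [PerfectRing k p] (n : ℕ) [Algebra (ZMod (p ^ n)) (TruncatedWittVector p n k)] :
    Module.Flat (ZMod (p ^ n)) (TruncatedWittVector p n k) := by
  refine Module.Flat.of_isPrincipalIdealRing fun a m ham => ?_
  obtain ⟨e, he, u, rfl⟩ := ZMod.exists_eq_pow_mul_unit (Fact.out : p.Prime) n a
  have hm : (p : TruncatedWittVector p n k) ^ e * m = 0 := by
    rwa [mul_comm, mul_smul, u.isUnit.smul_eq_zero, Algebra.smul_def, map_pow, map_natCast] at ham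
  obtain ⟨m', rfl⟩ := TruncatedWittVector.exists_eq_p_pow_mul_of_p_pow_mul_eq_zero he hm
  refine ⟨p ^ (n - e), m', ?_, ?_⟩
  · rw [← mul_assoc, ← pow_add, Nat.sub_add_cancel he, ← Nat.cast_pow, ZMod.natCast_self, zero_mul]
  · rw [Algebra.smul_def, map_pow, map_natCast]

/-- Let `p` be a prime and `k` a perfect field of characteristic `p`.
Then the ring `W₂(k)` of Witt vectors of length two over `k` is flat as a module over
`ℤ/p²ℤ` (where `W₂(k)` is a `ℤ/p²ℤ`-algebra via the unique ring homomorphism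
`ZMod (p ^ 2) →+* W₂(k)`; note that `Algebra (ZMod (p ^ 2)) (TruncatedWittVector p 2 k)`
is a subsingleton, so the instance below is unique). -/
theorem flat_truncatedWittVector_two_over_zmod_pow_two
    (p : ℕ) [Fact p.Prime] (k : Type) [Field k] [CharP k p] [PerfectRing k p]
    [Algebra (ZMod (p ^ 2)) (TruncatedWittVector p 2 k)] :
    Module.Flat (ZMod (p ^ 2)) (TruncatedWittVector p 2 k) :=
  TruncatedWittVector.flat_zmod k 2
end

section
/- Let p be a prime and R a commutative ring that is a flat ℤ/p²ℤ-algebra, and set A = R/pR. Then the assignment x ↦ 1 + p·x̃ (where x̃ ∈ R is any lift of x ∈ A) is a well-defined injective group homomorphism q from the additive group of A to the group of units R^×, and the image of q is exactly the kernel of the natural group homomorphism R^× → A^× induced by reduction modulo p. Equivalently, the sequence 0 → A → R^× → A^× is exact with first map q. -/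
/-!
Because `p² = 0` in `R`, the map `x ↦ 1 + p x` is a homomorphism from `(R, +)` to `Rˣ` that
kills `pR`, and a unit reduces to `1` modulo `p` exactly when it is of the form `1 + p x`.
The kernel of `x ↦ 1 + p x` is the annihilator of `p`, and flatness identifies it with `pR`:
tensoring the exact sequence `ℤ/p² →(p) ℤ/p² →(p) ℤ/p²` with `R` keeps it exact.
-/

theorem ZMod.exact_mul_natCast_pow_two (n : ℕ) [NeZero n] :
    Function.Exact (fun x : ZMod (n ^ 2) ↦ (n : ZMod (n ^ 2)) * x)
      (fun x ↦ (n : ZMod (n ^ 2)) * x) := by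
  refine fun x ↦ ⟨fun hx ↦ ?_, ?_⟩
  · have hdvd : n * n ∣ n * x.val := by
      rw [← pow_two, ← ZMod.natCast_eq_zero_iff, Nat.cast_mul, ZMod.natCast_zmod_val]
      exact hx
    obtain ⟨k, hk⟩ := Nat.dvd_of_mul_dvd_mul_left (Nat.pos_of_neZero n) hdvd
    exact ⟨k, show (n : ZMod (n ^ 2)) * k = x by
      rw [← Nat.cast_mul, ← hk, ZMod.natCast_zmod_val]⟩
  · rintro ⟨y, rfl⟩
    show (n : ZMod (n ^ 2)) * (n * y) = 0
    rw [← mul_assoc, ← Nat.cast_mul, ← pow_two, ZMod.natCast_self, zero_mul]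

theorem Module.Flat.exact_smul_of_exact_mul {S M : Type*} [CommRing S] [AddCommGroup M]
    [Module S M] [Module.Flat S M] {a b : S}
    (h : Function.Exact (fun x : S ↦ a * x) (fun x ↦ b * x)) :
    Function.Exact (fun x : M ↦ a • x) (fun x ↦ b • x) := by
  have hS : Function.Exact (DistribSMul.toLinearMap S S a) (DistribSMul.toLinearMap S S b) := h
  have hSM := Module.Flat.rTensor_exact M hS
  simp only [LinearMap.rTensor_smul_action] at hSM
  suffices Function.Exact (DistribSMul.toLinearMap S M a) (DistribSMul.toLinearMap S M b) from this
  refine (Function.Exact.iff_of_ladder_linearEquiv (e₁ := TensorProduct.lid S M)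
    (e₂ := TensorProduct.lid S M) (e₃ := TensorProduct.lid S M) ?_ ?_).mpr hSM <;>
  · ext; simp

section OneAddMul

variable {R : Type*} [CommRing R] {ε : R}

def oneAddMulUnit (hε : ε * ε = 0) (x : R) : Rˣ where
  val := 1 + ε * x
  inv := 1 - ε * x
  val_inv := by linear_combination (-(x * x)) * hε
  inv_val := by linear_combination (-(x * x)) * hε

theorem val_oneAddMulUnit (hε : ε * ε = 0) (x : R) : (oneAddMulUnit hε x : R) = 1 + ε * x :=
  rfl

def oneAddMulHom (hε : ε * ε = 0) : R →+ Additive Rˣ where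
  toFun x := Additive.ofMul (oneAddMulUnit hε x)
  map_zero' := by ext; simp [oneAddMulUnit]
  map_add' x y := by
    rw [← ofMul_mul]
    ext
    show 1 + ε * (x + y) = (1 + ε * x) * (1 + ε * y)
    linear_combination (-(x * y)) * hε

def quotOneAddMulHom (hε : ε * ε = 0) : R ⧸ Ideal.span {ε} →+ Additive Rˣ :=
  QuotientAddGroup.lift (Ideal.span {ε}).toAddSubgroup (oneAddMulHom hε) fun x hx ↦ by
    obtain ⟨c, rfl⟩ := Ideal.mem_span_singleton'.mp hx
    ext
    show 1 + ε * (c * ε) = 1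
    linear_combination c * hε

theorem val_quotOneAddMulHom_mk (hε : ε * ε = 0) (x : R) :
    ((Additive.toMul (quotOneAddMulHom hε (Ideal.Quotient.mk _ x)) : Rˣ) : R) = 1 + ε * x :=
  rfl

theorem quotOneAddMulHom_injective (hε : ε * ε = 0)
    (hann : ∀ x, ε * x = 0 → ∃ y, ε * y = x) :
    Function.Injective (quotOneAddMulHom hε) := by
  intro a b hab
  obtain ⟨x, rfl⟩ := Ideal.Quotient.mk_surjective a
  obtain ⟨y, rfl⟩ := Ideal.Quotient.mk_surjective b
  have hval := congrArg (fun u ↦ ((Additive.toMul u : Rˣ) : R)) hab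
  simp only [val_quotOneAddMulHom_mk] at hval
  obtain ⟨z, hz⟩ := hann (x - y) (by linear_combination hval)
  exact Ideal.Quotient.eq.mpr (Ideal.mem_span_singleton'.mpr ⟨z, by rw [mul_comm, hz]⟩)

theorem mem_range_quotOneAddMulHom_iff (hε : ε * ε = 0) (u : Rˣ) :
    Additive.ofMul u ∈ (quotOneAddMulHom hε).range ↔
      Units.map (Ideal.Quotient.mk (Ideal.span {ε})).toMonoidHom u = 1 := by
  rw [Units.ext_iff, Units.coe_map, Units.val_one, RingHom.toMonoidHom_eq_coe,
    MonoidHom.coe_coe, ← map_one (Ideal.Quotient.mk _), Ideal.Quotient.eq,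
    Ideal.mem_span_singleton']
  constructor
  · rintro ⟨a, ha⟩
    obtain ⟨x, rfl⟩ := Ideal.Quotient.mk_surjective a
    obtain rfl : oneAddMulUnit hε x = u := Additive.ofMul.injective ha
    exact ⟨x, by rw [val_oneAddMulUnit]; ring⟩
  · rintro ⟨c, hc⟩
    refine ⟨Ideal.Quotient.mk _ c, congrArg Additive.ofMul (Units.ext ?_)⟩
    show 1 + ε * c = u
    linear_combination hc

end OneAddMul

/-- Let `p` be a prime and `R` a commutative ring that is a flat
`ℤ/p²ℤ`-algebra, and set `A = R/pR`. Then the assignment `x ↦ 1 + p·x̃` (where `x̃ ∈ R`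
is any lift of `x ∈ A`) is a well-defined injective group homomorphism `q` from the
additive group of `A` to the group of units `R^×`, and the image of `q` is exactly the
kernel of the natural group homomorphism `R^× → A^×` induced by reduction modulo `p`;
i.e. the sequence `0 → A → R^× → A^×` is exact with first map `q`. -/
theorem exists_exp_p_hom_of_flat
    (p : ℕ) [Fact p.Prime] (R : Type) [CommRing R] [Algebra (ZMod (p ^ 2)) R]
    [Module.Flat (ZMod (p ^ 2)) R] :
    ∃ q : (R ⧸ Ideal.span {(p : R)}) →+ Additive Rˣ,
      (∀ x : R,
        ((Additive.toMul (q (Ideal.Quotient.mk (Ideal.span {(p : R)}) x)) : Rˣ) : R)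
          = 1 + (p : R) * x) ∧
      Function.Injective q ∧
      (∀ u : Rˣ, Additive.ofMul u ∈ AddMonoidHom.range q ↔
        Units.map (Ideal.Quotient.mk (Ideal.span {(p : R)})).toMonoidHom u = 1) := by
  have hexact : Function.Exact (fun x : R ↦ (p : R) * x) (fun x ↦ (p : R) * x) := by
    have := Module.Flat.exact_smul_of_exact_mul (M := R) (ZMod.exact_mul_natCast_pow_two p)
    simpa only [Algebra.smul_def, map_natCast] using this
  have hsq : (p : R) * p = 0 := by simpa using hexact.apply_apply_eq_zero 1
  exact ⟨quotOneAddMulHom hsq, val_quotOneAddMulHom_mk hsq,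
    quotOneAddMulHom_injective hsq fun x ↦ (hexact x).mp,
    mem_range_quotOneAddMulHom_iff hsq⟩
end

section
/- Let p be a prime, k a perfect field of characteristic p, and let ρ : W₂(k)[x₁,…,xₙ] → k[x₁,…,xₙ] be the ring homomorphism on polynomial rings induced by the reduction map r : W₂(k) → k. Let f ∈ k[x₁,…,xₙ] be a nonzero polynomial and let f̃ ∈ W₂(k)[x₁,…,xₙ] be any polynomial with ρ(f̃) = f. Then the quotient ring W₂(k)[x₁,…,xₙ]/(f̃) is flat as a W₂(k)-module, and ρ induces an isomorphism of k-algebras (W₂(k)[x₁,…,xₙ]/(f̃)) ⊗_{W₂(k)} k ≅ k[x₁,…,xₙ]/(f). -/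
/-!
The ring `W₂(k)` is local with maximal ideal `ker r = (p)`, `p² = 0` and `ann(p) = (p)`
(perfectness of `k` makes every element of `ker r` divisible by `p`); so its only ideals are
`0`, `(p)` and `W₂(k)`, and by the ideal criterion a module `M` is flat as soon as `p m = 0`
implies `m ∈ p M`. For `M = W₂(k)[x]/(f̃)`: if `p g = h f̃`, reducing mod `p` gives
`ρ(h) f = 0`, hence `h = p h₁` since `k[x]` is a domain; then `p (g - f̃ h₁) = 0`, so
`g - f̃ h₁ ∈ p W₂(k)[x]` and `g ∈ p M`. The isomorphism is the general base change
`S ⊗_R R[x]/(F) ≅ S[x]/(F)`.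
-/

/-- The reduction map `r : W₂(k) → k`, sending a length-two Witt vector to its
zeroth component. -/
noncomputable def wittReduction (p : ℕ) [hp : Fact p.Prime]
    (k : Type) [CommRing k] : TruncatedWittVector p 2 k →+* k where
  toFun x := x.coeff 0
  map_zero' := by
    show TruncatedWittVector.coeff 0 (0 : TruncatedWittVector p 2 k) = 0
    rw [← map_zero (WittVector.truncate (p := p) (R := k) 2), WittVector.coeff_truncate]
    exact WittVector.zero_coeff p k 0
  map_one' := by
    show TruncatedWittVector.coeff 0 (1 : TruncatedWittVector p 2 k) = 1
    rw [← map_one (WittVector.truncate (p := p) (R := k) 2), WittVector.coeff_truncate]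
    exact WittVector.one_coeff_zero p k
  map_add' x y := by
    obtain ⟨a, rfl⟩ := WittVector.truncate_surjective p 2 k x
    obtain ⟨b, rfl⟩ := WittVector.truncate_surjective p 2 k y
    show TruncatedWittVector.coeff 0 ((WittVector.truncate 2) a + (WittVector.truncate 2) b) =
      TruncatedWittVector.coeff 0 ((WittVector.truncate 2) a) +
        TruncatedWittVector.coeff 0 ((WittVector.truncate 2) b)
    rw [← map_add, WittVector.coeff_truncate, WittVector.coeff_truncate,
      WittVector.coeff_truncate]
    exact WittVector.add_coeff_zero a b
  map_mul' x y := by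
    obtain ⟨a, rfl⟩ := WittVector.truncate_surjective p 2 k x
    obtain ⟨b, rfl⟩ := WittVector.truncate_surjective p 2 k y
    show TruncatedWittVector.coeff 0 ((WittVector.truncate 2) a * (WittVector.truncate 2) b) =
      TruncatedWittVector.coeff 0 ((WittVector.truncate 2) a) *
        TruncatedWittVector.coeff 0 ((WittVector.truncate 2) b)
    rw [← map_mul, WittVector.coeff_truncate, WittVector.coeff_truncate,
      WittVector.coeff_truncate]
    exact WittVector.mul_coeff_zero a b

/-- `r x` is the zeroth Witt component of `x`. -/
theorem wittReduction_apply (p : ℕ) [Fact p.Prime] (k : Type) [CommRing k]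
    (x : TruncatedWittVector p 2 k) : wittReduction p k x = x.coeff 0 := rfl

section WittReduction

variable {p : ℕ} [Fact p.Prime] {k : Type} [CommRing k]

local notation "W₂" => TruncatedWittVector p 2 k

variable (p k) in
theorem wittReduction_surjective : Function.Surjective (wittReduction p k) := fun a =>
  ⟨TruncatedWittVector.mk p ![a, 0], TruncatedWittVector.coeff_mk (p := p) ![a, 0] 0⟩

variable [CharP k p]

theorem natCast_mul_truncate (w : WittVector p k) :
    (p : W₂) * WittVector.truncate 2 w =
      WittVector.truncate 2 (WittVector.verschiebung (WittVector.frobenius w)) := by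
  rw [WittVector.verschiebung_frobenius, map_mul, map_natCast, mul_comm]

theorem coeff_zero_natCast_mul (x : W₂) : ((p : W₂) * x).coeff 0 = 0 := by
  obtain ⟨w, rfl⟩ := WittVector.truncate_surjective p 2 k x
  rw [natCast_mul_truncate, WittVector.coeff_truncate]
  exact WittVector.verschiebung_coeff_zero _

theorem coeff_one_natCast_mul (x : W₂) : ((p : W₂) * x).coeff 1 = x.coeff 0 ^ p := by
  obtain ⟨w, rfl⟩ := WittVector.truncate_surjective p 2 k x
  rw [natCast_mul_truncate, WittVector.coeff_truncate, WittVector.coeff_truncate]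
  exact (WittVector.verschiebung_coeff_succ _ 0).trans (WittVector.coeff_frobenius_charP p w 0)

theorem natCast_mul_eq_zero_iff [IsReduced k] (x : W₂) :
    (p : W₂) * x = 0 ↔ wittReduction p k x = 0 := by
  rw [wittReduction_apply]
  constructor
  · intro h
    have h1 := coeff_one_natCast_mul x
    rw [h, TruncatedWittVector.coeff_zero] at h1
    exact (pow_eq_zero_iff (Fact.out : p.Prime).ne_zero).1 h1.symm
  · intro h
    refine TruncatedWittVector.ext fun i => ?_
    rw [TruncatedWittVector.coeff_zero]
    fin_cases i
    · exact coeff_zero_natCast_mul x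
    · simp [coeff_one_natCast_mul, h, (Fact.out : p.Prime).ne_zero]

theorem ker_wittReduction [PerfectRing k p] :
    RingHom.ker (wittReduction p k) = Ideal.span {(p : W₂)} := by
  refine le_antisymm (fun x hx => Ideal.mem_span_singleton'.2 ?_) ?_
  · -- `p` times a Witt vector `(a, b)` is `(0, a ^ p)`, and every `b` is a `p`-th power.
    refine ⟨TruncatedWittVector.mk p ![(frobeniusEquiv k p).symm (x.coeff 1), 0], ?_⟩
    refine TruncatedWittVector.ext fun i => ?_
    rw [mul_comm]
    fin_cases i
    · exact (coeff_zero_natCast_mul _).trans hx.symm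
    · simp [coeff_one_natCast_mul, TruncatedWittVector.coeff_mk]
  · rw [Ideal.span_le, Set.singleton_subset_iff, SetLike.mem_coe, RingHom.mem_ker, map_natCast]
    exact CharP.cast_eq_zero k p

end WittReduction

theorem isUnit_of_isUnit_map_of_isNilpotent_ker {A S : Type*} [CommRing A] [CommRing S]
    {r : A →+* S} (hr : Function.Surjective r) (hnil : ∀ z, r z = 0 → IsNilpotent z) {x : A}
    (hx : IsUnit (r x)) : IsUnit x := by
  obtain ⟨y, hy⟩ := hr ↑hx.unit⁻¹
  have hxy : r (x * y - 1) = 0 := by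
    rw [map_sub, map_mul, map_one, hy, IsUnit.mul_val_inv, sub_self]
  have hunit : IsUnit (x * y) := by simpa using (hnil _ hxy).isUnit_one_add
  exact isUnit_of_mul_isUnit_left hunit

section SquareZeroReduction

variable {A K : Type*} [CommRing A] {π : A}

theorem mul_self_eq_zero_of_ker_eq_span [Semiring K] {r : A →+* K}
    (hker : RingHom.ker r = Ideal.span {π}) (hann : ∀ x, r x = 0 → π * x = 0) : π * π = 0 :=
  hann π (hker.symm ▸ Ideal.mem_span_singleton_self π : π ∈ RingHom.ker r)

theorem Ideal.eq_bot_or_eq_span_or_eq_top_of_ker_eq_span [Field K] {r : A →+* K}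
    (hr : Function.Surjective r) (hker : RingHom.ker r = Ideal.span {π})
    (hann : ∀ x, r x = 0 → π * x = 0) (I : Ideal A) :
    I = ⊥ ∨ I = Ideal.span {π} ∨ I = ⊤ := by
  have hunit : ∀ x, r x ≠ 0 → IsUnit x := by
    refine fun x hx => isUnit_of_isUnit_map_of_isNilpotent_ker hr (fun z hz => ⟨2, ?_⟩)
      (isUnit_iff_ne_zero.2 hx)
    obtain ⟨c, rfl⟩ := Ideal.mem_span_singleton'.1 (hker ▸ RingHom.mem_ker.2 hz)
    rw [mul_pow, sq π, mul_self_eq_zero_of_ker_eq_span hker hann, mul_zero]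
  by_cases hI : I ≤ RingHom.ker r
  · refine (eq_or_ne I ⊥).imp id fun hbot => Or.inl (le_antisymm (hker ▸ hI) ?_)
    obtain ⟨x, hxI, hx0⟩ := Submodule.exists_mem_ne_zero_of_ne_bot hbot
    obtain ⟨y, rfl⟩ := Ideal.mem_span_singleton'.1 (hker ▸ hI hxI)
    have hy : r y ≠ 0 := fun hy => hx0 (by rw [mul_comm, hann y hy])
    rwa [Ideal.span_le, Set.singleton_subset_iff, SetLike.mem_coe,
      ← Ideal.unit_mul_mem_iff_mem I (hunit y hy)]
  · obtain ⟨x, hxI, hx⟩ := SetLike.not_le_iff_exists.1 hI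
    exact Or.inr (Or.inr (Ideal.eq_top_of_isUnit_mem I hxI (hunit x hx)))

end SquareZeroReduction

open TensorProduct

section Flatness

open LinearMap

variable {A M : Type*} [CommRing A] [AddCommGroup M] [Module A M] {π : A}

theorem exists_generator_tmul_eq (t : Ideal.span {π} ⊗[A] M) :
    ∃ m : M, (⟨π, Ideal.mem_span_singleton_self π⟩ : Ideal.span {π}) ⊗ₜ m = t := by
  induction t using TensorProduct.induction_on with
  | zero => exact ⟨0, tmul_zero _ _⟩
  | tmul x m =>
    obtain ⟨c, hc⟩ := Ideal.mem_span_singleton'.1 x.2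
    refine ⟨c • m, ?_⟩
    rw [← smul_tmul]
    congr 1
    exact Subtype.ext hc
  | add a b ha hb =>
    obtain ⟨m₁, rfl⟩ := ha
    obtain ⟨m₂, rfl⟩ := hb
    exact ⟨m₁ + m₂, tmul_add _ _ _⟩

theorem rTensor_subtype_span_singleton_injective (hπ : π * π = 0)
    (hM : ∀ m : M, π • m = 0 → ∃ m', π • m' = m) :
    Function.Injective (rTensor M (Ideal.span {π}).subtype) := by
  refine (injective_iff_map_eq_zero _).2 fun t ht => ?_
  obtain ⟨m, rfl⟩ := exists_generator_tmul_eq t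
  have hm : π • m = 0 := by simpa using congrArg (TensorProduct.lid A M) ht
  obtain ⟨m', rfl⟩ := hM m hm
  rw [tmul_smul, smul_tmul']
  have hπ' : π • (⟨π, Ideal.mem_span_singleton_self π⟩ : Ideal.span {π}) = 0 :=
    Subtype.ext hπ
  rw [hπ', zero_tmul]

theorem Module.Flat.of_ker_smul_le_range_smul (hπ : π * π = 0)
    (hideal : ∀ I : Ideal A, I = ⊥ ∨ I = Ideal.span {π} ∨ I = ⊤)
    (hM : ∀ m : M, π • m = 0 → ∃ m', π • m' = m) : Module.Flat A M := by
  refine Module.Flat.iff_rTensor_injective'.2 fun I => ?_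
  rcases hideal I with rfl | rfl | rfl
  · exact Function.injective_of_subsingleton _
  · exact rTensor_subtype_span_singleton_injective hπ hM
  · exact (LinearEquiv.rTensor M Submodule.topEquiv).injective

end Flatness

section Polynomial

open MvPolynomial

variable {σ A K : Type*} [CommRing A] [CommRing K] {r : A →+* K} {π : A}

theorem MvPolynomial.exists_C_mul_eq_of_map_eq_zero (hker : RingHom.ker r = Ideal.span {π})
    {g : MvPolynomial σ A} (hg : map r g = 0) : ∃ q, C π * q = g := by
  have hmem : g ∈ Ideal.span {C π} := by
    rw [← Set.image_singleton, ← Ideal.map_span, ← hker, ← MvPolynomial.ker_map]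
    exact hg
  obtain ⟨q, hq⟩ := Ideal.mem_span_singleton'.1 hmem
  exact ⟨q, (mul_comm _ _).trans hq⟩

theorem exists_smul_eq_of_smul_eq_zero_of_map_ne_zero [IsDomain K]
    (hker : RingHom.ker r = Ideal.span {π}) (hann : ∀ x, π * x = 0 → r x = 0)
    {F : MvPolynomial σ A} (hF : map r F ≠ 0)
    (m : MvPolynomial σ A ⧸ Ideal.span {F}) (hm : π • m = 0) : ∃ m', π • m' = m := by
  obtain ⟨g, rfl⟩ := Ideal.Quotient.mk_surjective m
  have hπ : r π = 0 := RingHom.mem_ker.1 (hker ▸ Ideal.mem_span_singleton_self π)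
  have hsmul : ∀ q, π • Ideal.Quotient.mk (Ideal.span {F}) q =
      Ideal.Quotient.mk (Ideal.span {F}) (C π * q) := fun q => by
    rw [← smul_eq_C_mul]
    exact (map_smul (Ideal.Quotient.mkₐ A (Ideal.span {F})) π q).symm
  obtain ⟨h, hh⟩ : ∃ h, h * F = C π * g := by
    rw [← Ideal.mem_span_singleton', ← Ideal.Quotient.eq_zero_iff_mem, ← hsmul]
    exact hm
  obtain ⟨h₁, rfl⟩ : ∃ h₁, C π * h₁ = h := by
    refine MvPolynomial.exists_C_mul_eq_of_map_eq_zero hker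
      ((mul_eq_zero.1 ?_).resolve_right hF)
    rw [← map_mul, hh, map_mul, map_C, hπ, C_0, zero_mul]
  obtain ⟨q, hq⟩ : ∃ q, C π * q = g - F * h₁ := by
    refine MvPolynomial.exists_C_mul_eq_of_map_eq_zero hker (MvPolynomial.ext _ _ fun n => ?_)
    rw [coeff_map, coeff_zero]
    refine hann _ ?_
    rw [← coeff_C_mul, mul_sub, ← hh, mul_comm F, mul_assoc, sub_self, coeff_zero]
  refine ⟨Ideal.Quotient.mk _ q, ?_⟩
  rw [hsmul, hq, Ideal.Quotient.eq, sub_sub_cancel_left, neg_mem_iff]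
  exact Ideal.mul_mem_right _ _ (Ideal.mem_span_singleton_self F)

end Polynomial

section BaseChange

open MvPolynomial

variable {σ R S : Type*} [CommRing R] [CommRing S] [Algebra R S]

noncomputable def MvPolynomial.tensorQuotientSpanEquiv (F : MvPolynomial σ R) :
    S ⊗[R] (MvPolynomial σ R ⧸ Ideal.span {F}) ≃ₐ[S]
      MvPolynomial σ S ⧸ Ideal.span {map (algebraMap R S) F} :=
  (Algebra.TensorProduct.tensorQuotientEquiv S (MvPolynomial σ R) S (Ideal.span {F})).trans
    (Ideal.quotientEquivAlg _ _ (algebraTensorAlgEquiv R S) (by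
      rw [Ideal.map_span, Ideal.map_span, Set.image_singleton, Set.image_singleton]
      simp))

theorem MvPolynomial.tensorQuotientSpanEquiv_one_tmul (F g : MvPolynomial σ R) :
    tensorQuotientSpanEquiv (S := S) F (1 ⊗ₜ Ideal.Quotient.mk _ g) =
      Ideal.Quotient.mk _ (map (algebraMap R S) g) := by
  simp [tensorQuotientSpanEquiv]

end BaseChange

open TensorProduct in
/-- Let `p` be a prime, `k` a perfect field of characteristic `p`, and
`ρ : W₂(k)[x₁,…,xₙ] → k[x₁,…,xₙ]` the homomorphism induced by the reduction
`r : W₂(k) → k`. Let `f ∈ k[x₁,…,xₙ]` be a nonzero polynomial and `f̃` any polynomial with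
`ρ(f̃) = f`. Then `W₂(k)[x₁,…,xₙ]/(f̃)` is flat as a `W₂(k)`-module, and `ρ` induces an
isomorphism of `k`-algebras `(W₂(k)[x₁,…,xₙ]/(f̃)) ⊗_{W₂(k)} k ≅ k[x₁,…,xₙ]/(f)`. -/
theorem flat_and_baseChange_of_lift_of_polynomial
    (p n : ℕ) [Fact p.Prime] (k : Type) [Field k] [CharP k p] [PerfectRing k p]
    (f : MvPolynomial (Fin n) k) (hf : f ≠ 0)
    (F : MvPolynomial (Fin n) (TruncatedWittVector p 2 k))
    (hF : MvPolynomial.map (wittReduction p k) F = f) :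
    letI : Algebra (TruncatedWittVector p 2 k) k := (wittReduction p k).toAlgebra
    Module.Flat (TruncatedWittVector p 2 k)
      (MvPolynomial (Fin n) (TruncatedWittVector p 2 k) ⧸ Ideal.span {F}) ∧
    ∃ e : (k ⊗[TruncatedWittVector p 2 k]
        (MvPolynomial (Fin n) (TruncatedWittVector p 2 k) ⧸ Ideal.span {F}))
        ≃ₐ[k] (MvPolynomial (Fin n) k ⧸ Ideal.span {f}),
      ∀ g : MvPolynomial (Fin n) (TruncatedWittVector p 2 k),
        e (1 ⊗ₜ Ideal.Quotient.mk (Ideal.span {F}) g) =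
          Ideal.Quotient.mk (Ideal.span {f}) (MvPolynomial.map (wittReduction p k) g) := by
  let : Algebra (TruncatedWittVector p 2 k) k := (wittReduction p k).toAlgebra
  have hker := ker_wittReduction (p := p) (k := k)
  have hann := natCast_mul_eq_zero_iff (p := p) (k := k)
  refine ⟨Module.Flat.of_ker_smul_le_range_smul (π := (p : TruncatedWittVector p 2 k))
    ?_ ?_ ?_, ?_⟩
  · exact mul_self_eq_zero_of_ker_eq_span hker fun x => (hann x).2
  · exact Ideal.eq_bot_or_eq_span_or_eq_top_of_ker_eq_span (wittReduction_surjective p k) hker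
      fun x => (hann x).2
  · exact exists_smul_eq_of_smul_eq_zero_of_map_ne_zero hker (fun x => (hann x).1) (hF ▸ hf)
  · refine ⟨(MvPolynomial.tensorQuotientSpanEquiv F).trans
      (Ideal.quotientEquivAlgOfEq k (congrArg _ (congrArg _ hF))), fun g => ?_⟩
    rw [AlgEquiv.trans_apply, MvPolynomial.tensorQuotientSpanEquiv_one_tmul]
    rfl
end

section
/- Let p be a prime, k a perfect field of characteristic p, and let ρ : W₂(k)[x₀,…,xₙ] → k[x₀,…,xₙ] be the ring homomorphism induced by the reduction map r : W₂(k) → k. Let f ∈ k[x₀,…,xₙ] be a nonzero homogeneous polynomial of degree d. Then there exists a homogeneous polynomial f̃ ∈ W₂(k)[x₀,…,xₙ] of degree d with ρ(f̃) = f; and for any such f̃, the quotient W₂(k)[x₀,…,xₙ]/(f̃) is flat as a W₂(k)-module and ρ induces an isomorphism of k-algebras (W₂(k)[x₀,…,xₙ]/(f̃)) ⊗_{W₂(k)} k ≅ k[x₀,…,xₙ]/(f). -/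
set_option maxHeartbeats 1000000
set_option synthInstance.maxHeartbeats 200000
set_option linter.unusedSectionVars false

section Witt
variable (p : ℕ) [hp : Fact p.Prime] (k : Type) [Field k] [CharP k p]

theorem witt_truncate_out (x : TruncatedWittVector p 2 k) :
    WittVector.truncate 2 x.out = x := by
  ext i
  rw [WittVector.coeff_truncate, TruncatedWittVector.coeff_out]

theorem witt_natCast_p : (p : TruncatedWittVector p 2 k)
    = WittVector.truncate 2 (p : WittVector p k) := (map_natCast _ p).symm

theorem witt_pp : (p : TruncatedWittVector p 2 k) * p = 0 := by
  have h1 : (p : WittVector p k) * p = WittVector.verschiebung (p : WittVector p k) := by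
    conv_lhs => rw [← WittVector.verschiebung_frobenius (p : WittVector p k)]
    rw [map_natCast]
  rw [witt_natCast_p, ← map_mul, h1]
  ext i
  fin_cases i <;>
    simp [WittVector.coeff_truncate, WittVector.verschiebung_coeff_zero,
      WittVector.verschiebung_coeff_succ (p := p) (n := 0), WittVector.coeff_p_zero]

theorem witt_p_ne_zero : (p : TruncatedWittVector p 2 k) ≠ 0 := by
  intro h
  have := congrArg (fun z => TruncatedWittVector.coeff (1 : Fin 2) z) h
  rw [witt_natCast_p] at this
  simp only [WittVector.coeff_truncate] at this
  rw [show ((1 : Fin 2) : ℕ) = 1 from rfl, WittVector.coeff_p_one] at this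
  simp at this

theorem witt_isUnit (x : TruncatedWittVector p 2 k) (hx : x.coeff 0 ≠ 0) : IsUnit x := by
  have h0 : x.out.coeff 0 ≠ 0 := by
    rw [show (0 : ℕ) = ((0 : Fin 2) : ℕ) from rfl, TruncatedWittVector.coeff_out]
    exact hx
  have := WittVector.isUnit_of_coeff_zero_ne_zero x.out h0
  have h2 := this.map (WittVector.truncate (p := p) (R := k) 2)
  rwa [witt_truncate_out] at h2

theorem witt_exists_p_mul [PerfectRing k p] (x : TruncatedWittVector p 2 k)
    (hx : x.coeff 0 = 0) : ∃ y, x = (p : TruncatedWittVector p 2 k) * y := by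
  by_cases h0 : x = 0
  · exact ⟨0, by simp [h0]⟩
  have hX : x.out ≠ 0 := by
    intro h
    apply h0
    rw [← witt_truncate_out p k x, h, map_zero]
  obtain ⟨m, b, hb0, hXe⟩ := WittVector.exists_eq_pow_p_mul x.out hX
  cases m with
  | zero =>
    exfalso
    apply hb0
    rw [← hx, show (0 : ℕ) = ((0 : Fin 2) : ℕ) from rfl, ← TruncatedWittVector.coeff_out, hXe]
    simp
  | succ j =>
    refine ⟨(p : TruncatedWittVector p 2 k) ^ j * WittVector.truncate 2 b, ?_⟩
    rw [← witt_truncate_out p k x, hXe]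
    rw [map_mul, map_pow, map_natCast]
    ring

end Witt

open TensorProduct

section Gen
variable {A K : Type} [CommRing A] [CommRing K] (r : A →+* K) {σ : Type}

theorem tensor_span_singleton_eq {M : Type} [AddCommGroup M] [Module A M]
    (s : A) (z : (Ideal.span {s} : Ideal A) ⊗[A] M) :
    ∃ m : M, z = (⟨s, Ideal.subset_span rfl⟩ : Ideal.span {s}) ⊗ₜ m := by
  induction z using TensorProduct.induction_on with
  | zero => exact ⟨0, (tmul_zero _ _).symm⟩
  | tmul x m =>
    obtain ⟨a, ha⟩ := Ideal.mem_span_singleton'.mp x.2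
    refine ⟨a • m, ?_⟩
    rw [← smul_tmul]
    congr 1
    ext
    simpa [smul_eq_mul] using ha.symm
  | add x y hx hy =>
    obtain ⟨m₁, rfl⟩ := hx
    obtain ⟨m₂, rfl⟩ := hy
    exact ⟨m₁ + m₂, (tmul_add _ _ _).symm⟩

theorem exists_C_mul (t : A)
    (hker : ∀ a : A, r a = 0 → ∃ b, a = t * b)
    (h : MvPolynomial σ A) (hh : MvPolynomial.map r h = 0) :
    ∃ h₁ : MvPolynomial σ A, h = MvPolynomial.C t * h₁ := by
  classical
  have hc : ∀ m : σ →₀ ℕ, r (MvPolynomial.coeff m h) = 0 := by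
    intro m
    rw [← MvPolynomial.coeff_map]
    simp [hh]
  choose b hb using fun m => hker _ (hc m)
  refine ⟨h.support.sum (fun m => MvPolynomial.monomial m (b m)), ?_⟩
  ext m
  rw [MvPolynomial.coeff_C_mul, MvPolynomial.coeff_sum]
  have : ∀ m' ∈ h.support, MvPolynomial.coeff m ((MvPolynomial.monomial m') (b m'))
      = if m' = m then b m' else 0 := fun m' _ => MvPolynomial.coeff_monomial m m' (b m')
  rw [Finset.sum_congr rfl this, Finset.sum_ite_eq' h.support m b]
  by_cases hm : m ∈ h.support
  · rw [if_pos hm, ← hb]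
  · rw [if_neg hm, mul_zero]
    simpa using hm

theorem exists_hom_lift (hr : Function.Surjective r)
    (d : ℕ) (f : MvPolynomial σ K) (hf : f.IsHomogeneous d) :
    ∃ F : MvPolynomial σ A, F.IsHomogeneous d ∧ MvPolynomial.map r F = f := by
  choose s hs using hr
  refine ⟨f.support.sum (fun m => MvPolynomial.monomial m (s (MvPolynomial.coeff m f))), ?_, ?_⟩
  · apply MvPolynomial.IsHomogeneous.sum
    intro m hm
    refine MvPolynomial.isHomogeneous_monomial _ ?_
    rw [Finsupp.degree_eq_weight_one]
    exact hf (MvPolynomial.mem_support_iff.mp hm)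
  · rw [map_sum]
    simp only [MvPolynomial.map_monomial, hs]
    exact f.support_sum_monomial_coeff

end Gen

open TensorProduct

theorem tensor_span_singleton_eq' {A : Type} [CommRing A] {M : Type} [AddCommGroup M] [Module A M]
    (s : A) (z : (Ideal.span {s} : Ideal A) ⊗[A] M) :
    ∃ m : M, z = (⟨s, Ideal.subset_span rfl⟩ : Ideal.span {s}) ⊗ₜ m := by
  induction z using TensorProduct.induction_on with
  | zero => exact ⟨0, (tmul_zero _ _).symm⟩
  | tmul x m =>
    obtain ⟨a, ha⟩ := Ideal.mem_span_singleton'.mp x.2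
    refine ⟨a • m, ?_⟩
    rw [← smul_tmul]
    congr 1
    ext
    simpa [smul_eq_mul] using ha.symm
  | add x y hx hy =>
    obtain ⟨m₁, rfl⟩ := hx
    obtain ⟨m₂, rfl⟩ := hy
    exact ⟨m₁ + m₂, (tmul_add _ _ _).symm⟩

theorem exists_C_mul' {A K : Type} [CommRing A] [CommRing K] (r : A →+* K) {σ : Type} (t : A)
    (hker : ∀ a : A, r a = 0 → ∃ b, a = t * b)
    (h : MvPolynomial σ A) (hh : MvPolynomial.map r h = 0) :
    ∃ h₁ : MvPolynomial σ A, h = MvPolynomial.C t * h₁ := by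
  classical
  have hc : ∀ m : σ →₀ ℕ, r (MvPolynomial.coeff m h) = 0 := by
    intro m
    rw [← MvPolynomial.coeff_map]
    simp [hh]
  choose b hb using fun m => hker _ (hc m)
  refine ⟨h.support.sum (fun m => MvPolynomial.monomial m (b m)), ?_⟩
  ext m
  rw [MvPolynomial.coeff_C_mul, MvPolynomial.coeff_sum]
  have : ∀ m' ∈ h.support, MvPolynomial.coeff m ((MvPolynomial.monomial m') (b m'))
      = if m' = m then b m' else 0 := fun m' _ => MvPolynomial.coeff_monomial m m' (b m')
  rw [Finset.sum_congr rfl this, Finset.sum_ite_eq' h.support m b]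
  by_cases hm : m ∈ h.support
  · rw [if_pos hm, ← hb]
  · rw [if_neg hm, mul_zero]
    simpa using hm

theorem flat_aux {A K : Type} [CommRing A] [Field K] (r : A →+* K) (t : A)
    (htt : t * t = 0)
    (hker : ∀ a : A, r a = 0 ↔ ∃ b, a = t * b)
    (hann : ∀ a : A, t * a = 0 → r a = 0)
    (hclass : ∀ I : Ideal A, I = Ideal.span {(0 : A)} ∨ I = Ideal.span {t}
      ∨ I = Ideal.span {(1 : A)})
    {σ : Type} (F : MvPolynomial σ A) (hF : MvPolynomial.map r F ≠ 0) :
    Module.Flat A (MvPolynomial σ A ⧸ Ideal.span {F}) := by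
  set M := MvPolynomial σ A ⧸ Ideal.span {F} with hM
  rw [Module.Flat.iff_rTensor_injective']
  intro I
  rcases hclass I with h | h | h <;> subst h <;>
    rw [injective_iff_map_eq_zero] <;> intro z hz
  · -- I = span {0}
    obtain ⟨m, rfl⟩ := tensor_span_singleton_eq' 0 z
    rw [show (⟨(0 : A), Ideal.subset_span rfl⟩ :
      (Ideal.span {(0 : A)} : Ideal A)) = 0 from rfl, zero_tmul]
  · -- I = span {t}
    obtain ⟨mEl, rfl⟩ := tensor_span_singleton_eq' t z
    obtain ⟨g, rfl⟩ := Ideal.Quotient.mk_surjective mEl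
    rw [LinearMap.rTensor_tmul] at hz
    have hz' : t • (Ideal.Quotient.mk (Ideal.span {F}) g) = (0 : M) := by
      have h2 := congrArg (TensorProduct.lid A M) hz
      simpa using h2
    have hsm : t • (Ideal.Quotient.mk (Ideal.span {F}) g)
        = Ideal.Quotient.mk (Ideal.span {F}) (MvPolynomial.C t * g) := by
      rw [← MvPolynomial.smul_eq_C_mul, ← Ideal.Quotient.mkₐ_eq_mk A, map_smul]
    rw [hsm] at hz'
    have hmem : MvPolynomial.C t * g ∈ Ideal.span {F} :=
      (Ideal.Quotient.eq_zero_iff_mem).mp hz'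
    obtain ⟨c, hc⟩ := Ideal.mem_span_singleton'.mp hmem
    -- map r: 0 = map r c * map r F
    have hrt : r t = 0 := (hker t).mpr ⟨1, (mul_one t).symm⟩
    have h0 : MvPolynomial.map r c * MvPolynomial.map r F = 0 := by
      have := congrArg (MvPolynomial.map r) hc
      rw [map_mul, map_mul, MvPolynomial.map_C, hrt, MvPolynomial.C_0, zero_mul] at this
      exact this
    have hc0 : MvPolynomial.map r c = 0 := by
      rcases mul_eq_zero.mp h0 with h | h
      · exact h
      · exact absurd h hF
    obtain ⟨h₁, rfl⟩ := exists_C_mul' r t (fun a ha => (hker a).mp ha) c hc0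
    -- C t * (g - h₁ * F) = 0
    have hkey : MvPolynomial.C t * (g - h₁ * F) = 0 := by
      have := hc
      ring_nf at this ⊢
      linear_combination -this
    have hmap0 : MvPolynomial.map r (g - h₁ * F) = 0 := by
      ext m
      rw [MvPolynomial.coeff_map]
      apply hann
      have := congrArg (MvPolynomial.coeff m) hkey
      rwa [MvPolynomial.coeff_C_mul, MvPolynomial.coeff_zero] at this
    obtain ⟨g₁, hg₁⟩ := exists_C_mul' r t (fun a ha => (hker a).mp ha) _ hmap0
    have hg : g = h₁ * F + MvPolynomial.C t * g₁ := by linear_combination hg₁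
    have hmkg : Ideal.Quotient.mk (Ideal.span {F}) g
        = t • Ideal.Quotient.mk (Ideal.span {F}) g₁ := by
      rw [hg, map_add, Ideal.Quotient.eq_zero_iff_mem.mpr
        (Ideal.mem_span_singleton'.mpr ⟨h₁, rfl⟩), zero_add,
        ← MvPolynomial.smul_eq_C_mul, ← Ideal.Quotient.mkₐ_eq_mk A, map_smul]
    rw [hmkg, tmul_smul, smul_tmul']
    have ht0 : t • (⟨t, Ideal.subset_span rfl⟩ : (Ideal.span {t} : Ideal A)) = 0 := by
      ext
      simpa [smul_eq_mul] using htt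
    rw [ht0, zero_tmul]
  · -- I = span {1}
    obtain ⟨m, rfl⟩ := tensor_span_singleton_eq' 1 z
    rw [LinearMap.rTensor_tmul] at hz
    have hz' : m = 0 := by
      have h2 := congrArg (TensorProduct.lid A M) hz
      simpa using h2
    rw [hz', tmul_zero]

open TensorProduct in
theorem baseChange_aux {A K : Type} [CommRing A] [CommRing K] (r : A →+* K)
    {σ : Type} (F : MvPolynomial σ A) :
    letI : Algebra A K := r.toAlgebra
    ∃ e : (K ⊗[A] (MvPolynomial σ A ⧸ Ideal.span {F})) ≃ₐ[K]
        (MvPolynomial σ K ⧸ Ideal.span {MvPolynomial.map r F}),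
      ∀ g : MvPolynomial σ A,
        e (1 ⊗ₜ Ideal.Quotient.mk (Ideal.span {F}) g)
          = Ideal.Quotient.mk (Ideal.span {MvPolynomial.map r F}) (MvPolynomial.map r g) := by
  letI : Algebra A K := r.toAlgebra
  set I : Ideal (MvPolynomial σ A) := Ideal.span {F} with hI
  set J : Ideal (MvPolynomial σ K) := Ideal.span {MvPolynomial.map r F} with hJ
  letI : IsScalarTower A K (MvPolynomial σ K ⧸ J) :=
    Ideal.Quotient.isScalarTower A K J
  -- ψ₂' : MvPolynomial σ A →ₐ[A] MvPolynomial σ K ⧸ J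
  let ψ₂' : MvPolynomial σ A →ₐ[A] (MvPolynomial σ K ⧸ J) :=
    { toRingHom := (Ideal.Quotient.mk J).comp (MvPolynomial.map r),
      commutes' := fun a => by
        show Ideal.Quotient.mk J (MvPolynomial.map r (MvPolynomial.C a)) = _
        rw [MvPolynomial.map_C]
        rfl }
  have hψ₂' : ∀ g : MvPolynomial σ A,
      ψ₂' g = Ideal.Quotient.mk J (MvPolynomial.map r g) := fun g => rfl
  have hvan : ∀ a ∈ I, ψ₂' a = 0 := by
    intro a ha
    obtain ⟨c, hc⟩ := Ideal.mem_span_singleton'.mp ha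
    rw [hψ₂', ← hc, map_mul, map_mul]
    have h0 : Ideal.Quotient.mk J (MvPolynomial.map r F) = 0 :=
      Ideal.Quotient.eq_zero_iff_mem.mpr (Ideal.subset_span rfl)
    rw [h0, mul_zero]
  let ψ₂ : (MvPolynomial σ A ⧸ I) →ₐ[A] (MvPolynomial σ K ⧸ J) :=
    Ideal.Quotient.liftₐ I ψ₂' hvan
  let φ : (K ⊗[A] (MvPolynomial σ A ⧸ I)) →ₐ[K] (MvPolynomial σ K ⧸ J) :=
    Algebra.TensorProduct.lift (Algebra.ofId K _) ψ₂ (fun x y => Commute.all _ _)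
  have hφ : ∀ (c : K) (g : MvPolynomial σ A),
      φ (c ⊗ₜ Ideal.Quotient.mk I g)
        = algebraMap K _ c * Ideal.Quotient.mk J (MvPolynomial.map r g) := by
    intro c g
    rw [show φ (c ⊗ₜ Ideal.Quotient.mk I g)
      = (Algebra.ofId K _) c * ψ₂ (Ideal.Quotient.mk I g) from
        Algebra.TensorProduct.lift_tmul _ _ _ _ _]
    rw [show ψ₂ (Ideal.Quotient.mk I g) = ψ₂' g from Ideal.Quotient.liftₐ_apply _ _ _ _]
    rfl
  -- the map u : MvPolynomial σ K →ₐ[K] K ⊗ (MvPoly A ⧸ I)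
  let u : MvPolynomial σ K →ₐ[K] (K ⊗[A] (MvPolynomial σ A ⧸ I)) :=
    MvPolynomial.aeval (fun i => (1 : K) ⊗ₜ[A] Ideal.Quotient.mk I (MvPolynomial.X i))
  have key : ∀ g : MvPolynomial σ A,
      u (MvPolynomial.map r g) = 1 ⊗ₜ Ideal.Quotient.mk I g := by
    intro g
    induction g using MvPolynomial.induction_on with
    | C a =>
      rw [MvPolynomial.map_C]
      rw [show u (MvPolynomial.C (r a))
        = algebraMap K (K ⊗[A] (MvPolynomial σ A ⧸ I)) (r a) from MvPolynomial.aeval_C _ _]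
      rw [Algebra.TensorProduct.algebraMap_apply]
      have h1 : (algebraMap K K) (r a) = a • (1 : K) := by
        rw [Algebra.smul_def, mul_one]; rfl
      rw [h1, smul_tmul]
      congr 1
      rw [← Algebra.algebraMap_eq_smul_one]
      rfl
    | add p q hp hq =>
      rw [map_add, map_add, hp, hq, ← tmul_add, ← map_add]
    | mul_X q i hq =>
      rw [map_mul, MvPolynomial.map_X, map_mul, hq]
      rw [show u (MvPolynomial.X i) = (1 : K) ⊗ₜ Ideal.Quotient.mk I (MvPolynomial.X i)
        from MvPolynomial.aeval_X _ _]
      rw [Algebra.TensorProduct.tmul_mul_tmul, one_mul, ← map_mul]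
  have hvan2 : ∀ a ∈ J, u a = 0 := by
    intro a ha
    obtain ⟨c, hc⟩ := Ideal.mem_span_singleton'.mp ha
    have h0 : Ideal.Quotient.mk I F = 0 :=
      Ideal.Quotient.eq_zero_iff_mem.mpr (Ideal.subset_span rfl)
    rw [← hc, map_mul, key F, h0, tmul_zero]
    exact mul_zero (u c)
  let ψ : (MvPolynomial σ K ⧸ J) →ₐ[K] (K ⊗[A] (MvPolynomial σ A ⧸ I)) :=
    Ideal.Quotient.liftₐ J u hvan2
  have hψ : ∀ g : MvPolynomial σ K, ψ (Ideal.Quotient.mk J g) = u g :=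
    fun g => Ideal.Quotient.liftₐ_apply _ _ _ _
  have hcomp1 : φ.comp ψ = AlgHom.id K _ := by
    apply Ideal.Quotient.algHom_ext
    apply MvPolynomial.algHom_ext
    intro i
    simp only [AlgHom.comp_apply, Ideal.Quotient.mkₐ_eq_mk, AlgHom.id_apply]
    rw [hψ]
    rw [show u (MvPolynomial.X i) = (1 : K) ⊗ₜ Ideal.Quotient.mk I (MvPolynomial.X i)
      from MvPolynomial.aeval_X _ _]
    rw [hφ, map_one, one_mul, MvPolynomial.map_X]
  have hcomp2 : ψ.comp φ = AlgHom.id K _ := by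
    apply AlgHom.ext
    intro z
    induction z using TensorProduct.induction_on with
    | zero => simp
    | tmul c b0 =>
      obtain ⟨g, rfl⟩ := Ideal.Quotient.mk_surjective b0
      simp only [AlgHom.comp_apply, AlgHom.id_apply]
      rw [hφ, map_mul, AlgHom.commutes, hψ, key]
      rw [Algebra.TensorProduct.algebraMap_apply, Algebra.TensorProduct.tmul_mul_tmul,
        mul_one, one_mul]
      rfl
    | add x y hx hy =>
      simp only [AlgHom.comp_apply, AlgHom.id_apply] at hx hy ⊢
      rw [map_add, map_add, hx, hy]
  refine ⟨AlgEquiv.ofAlgHom φ ψ hcomp1 hcomp2, ?_⟩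
  intro g
  show φ (1 ⊗ₜ Ideal.Quotient.mk I g) = _
  rw [hφ, map_one, one_mul]

open TensorProduct in
/-- Let `p` be a prime, `k` a perfect field of characteristic `p`, and
`ρ : W₂(k)[x₀,…,xₙ] → k[x₀,…,xₙ]` the homomorphism induced by the reduction
`r : W₂(k) → k`. Let `f ∈ k[x₀,…,xₙ]` be a nonzero homogeneous polynomial of degree `d`.
Then there exists a homogeneous polynomial `f̃` of degree `d` with `ρ(f̃) = f`; and for
any such `f̃`, the quotient `W₂(k)[x₀,…,xₙ]/(f̃)` is flat as a `W₂(k)`-module and `ρ`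
induces an isomorphism of `k`-algebras
`(W₂(k)[x₀,…,xₙ]/(f̃)) ⊗_{W₂(k)} k ≅ k[x₀,…,xₙ]/(f)`. -/
theorem homogeneous_lift_flat_and_baseChange
    (p n d : ℕ) [Fact p.Prime] (k : Type) [Field k] [CharP k p] [PerfectRing k p]
    (f : MvPolynomial (Fin (n + 1)) k) (hf : f ≠ 0) (hhom : f.IsHomogeneous d) :
    letI : Algebra (TruncatedWittVector p 2 k) k := (wittReduction p k).toAlgebra
    (∃ F : MvPolynomial (Fin (n + 1)) (TruncatedWittVector p 2 k),
      F.IsHomogeneous d ∧ MvPolynomial.map (wittReduction p k) F = f) ∧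
    ∀ F : MvPolynomial (Fin (n + 1)) (TruncatedWittVector p 2 k),
      F.IsHomogeneous d → MvPolynomial.map (wittReduction p k) F = f →
      Module.Flat (TruncatedWittVector p 2 k)
        (MvPolynomial (Fin (n + 1)) (TruncatedWittVector p 2 k) ⧸ Ideal.span {F}) ∧
      ∃ e : (k ⊗[TruncatedWittVector p 2 k]
          (MvPolynomial (Fin (n + 1)) (TruncatedWittVector p 2 k) ⧸ Ideal.span {F}))
          ≃ₐ[k] (MvPolynomial (Fin (n + 1)) k ⧸ Ideal.span {f}),
        ∀ g : MvPolynomial (Fin (n + 1)) (TruncatedWittVector p 2 k),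
          e (1 ⊗ₜ Ideal.Quotient.mk (Ideal.span {F}) g) =
            Ideal.Quotient.mk (Ideal.span {f}) (MvPolynomial.map (wittReduction p k) g) := by
  letI : Algebra (TruncatedWittVector p 2 k) k := (wittReduction p k).toAlgebra
  set r := wittReduction p k with hr
  have hsurj : Function.Surjective r := by
    intro a
    refine ⟨TruncatedWittVector.mk p (fun i => if i = 0 then a else 0), ?_⟩
    rw [hr, wittReduction_apply, TruncatedWittVector.coeff_mk]
    simp
  have hker : ∀ a : TruncatedWittVector p 2 k,
      r a = 0 ↔ ∃ b, a = (p : TruncatedWittVector p 2 k) * b := by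
    intro a
    constructor
    · intro h
      exact witt_exists_p_mul p k a h
    · rintro ⟨b, rfl⟩
      rw [map_mul, map_natCast, CharP.cast_eq_zero k p, zero_mul]
  have hann : ∀ a : TruncatedWittVector p 2 k,
      (p : TruncatedWittVector p 2 k) * a = 0 → r a = 0 := by
    intro a h
    by_contra h0
    obtain ⟨v, hv⟩ := witt_isUnit p k a h0
    apply witt_p_ne_zero p k
    calc (p : TruncatedWittVector p 2 k)
        = (p : TruncatedWittVector p 2 k) * a * ↑v⁻¹ := by
          rw [← hv, mul_assoc, Units.mul_inv, mul_one]
      _ = 0 := by rw [h, zero_mul]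
  have hclass : ∀ I : Ideal (TruncatedWittVector p 2 k),
      I = Ideal.span {(0 : TruncatedWittVector p 2 k)}
      ∨ I = Ideal.span {(p : TruncatedWittVector p 2 k)}
      ∨ I = Ideal.span {(1 : TruncatedWittVector p 2 k)} := by
    intro I
    by_cases h1 : ∃ x ∈ I, r x ≠ 0
    · right; right
      obtain ⟨x, hxI, hx⟩ := h1
      rw [Ideal.span_singleton_one]
      exact Ideal.eq_top_of_isUnit_mem I hxI (witt_isUnit p k x hx)
    · push_neg at h1
      by_cases h2 : I = ⊥
      · left
        rw [h2, Ideal.span_singleton_eq_bot.mpr rfl]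
      · right; left
        have hle : I ≤ Ideal.span {(p : TruncatedWittVector p 2 k)} := by
          intro x hx
          obtain ⟨y, hy⟩ := witt_exists_p_mul p k x (h1 x hx)
          rw [hy]
          exact Ideal.mul_mem_right _ _ (Ideal.subset_span rfl)
        obtain ⟨x, hxI, hx0⟩ := (Submodule.ne_bot_iff I).mp h2
        obtain ⟨y, hy⟩ := witt_exists_p_mul p k x (h1 x hxI)
        have hyu : IsUnit y := by
          apply witt_isUnit
          intro h0
          obtain ⟨z, hz⟩ := witt_exists_p_mul p k y h0
          apply hx0
          rw [hy, hz, ← mul_assoc, witt_pp, zero_mul]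
        obtain ⟨v, rfl⟩ := hyu
        have hpI : (p : TruncatedWittVector p 2 k) ∈ I := by
          have heq : (p : TruncatedWittVector p 2 k) = x * ↑v⁻¹ := by
            rw [hy, mul_assoc, Units.mul_inv, mul_one]
          rw [heq]
          exact Ideal.mul_mem_right _ _ hxI
        refine le_antisymm hle (Ideal.span_le.mpr ?_)
        simpa using hpI
  constructor
  · exact exists_hom_lift r hsurj d f hhom
  · intro F hFhom hFmap
    subst hFmap
    constructor
    · exact flat_aux r (p : TruncatedWittVector p 2 k) (witt_pp p k) hker hann hclass F hf
    · exact baseChange_aux r F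
end
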